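/- Let t > 0, let g : [0,t] → ℂ be continuously differentiable, and let c ∈ ℝ satisfy c + t < 0 (so that c + s < 0 for all s ∈ [0,t]). Then the improper iterated integral vanishes: lim_{C→∞} ∫_{−C}^{C} ( ∫_0^t e^{ik(c+s)} g(s) ds ) dk = 0. -/

import Mathlib

/-!
Integrating first in `k` (Fubini on the compact rectangle `[-C, C] × [0, t]`) and using
`c + s ≠ 0` on `[0, t]`, the inner integral is
`(e^{iC(c+s)} - e^{-iC(c+s)}) / (i(c+s))`. Hence the iterated integral equals `F C - F (-C)` with
`F w = ∫_0^t e^{iw(c+s)} g(s) / (i(c+s)) ds`, and `F w → 0` as `|w| → ∞` by the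
Riemann–Lebesgue lemma.
-/

open Filter intervalIntegral Complex Set Topology

lemma tendsto_intervalIntegral_exp_mul_cocompact (f : ℝ → ℂ) (a b : ℝ) :
    Tendsto (fun w : ℝ => ∫ u in a..b, cexp (I * w * u) * f u) (cocompact ℝ) (𝓝 0) := by
  have h2π : -(2 * Real.pi)⁻¹ ≠ 0 := by simp [Real.pi_ne_zero]
  have hw : Tendsto (fun w : ℝ => w * -(2 * Real.pi)⁻¹) (cocompact ℝ) (cocompact ℝ) :=
    (Homeomorph.mulRight₀ _ h2π).map_cocompact.le
  have hRL := ((Real.zero_at_infty_fourier ((uIoc a b).indicator f)).comp hw).const_smul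
    (if a ≤ b then (1 : ℝ) else -1)
  rw [smul_zero] at hRL
  refine hRL.congr fun w => ?_
  rw [Function.comp_apply, Real.fourier_real_eq_integral_exp_smul,
    intervalIntegral_eq_integral_uIoc, ← MeasureTheory.integral_indicator measurableSet_uIoc]
  congr 2
  funext u
  by_cases hu : u ∈ uIoc a b
  · simp only [indicator_of_mem hu, smul_eq_mul]
    congr 2
    push_cast
    field_simp
  · simp [indicator_of_notMem hu]

lemma tendsto_intervalIntegral_exp_mul_add_cocompact (f : ℝ → ℂ) (a b c : ℝ) :
    Tendsto (fun w : ℝ => ∫ s in a..b, cexp (I * w * (c + s)) * f s) (cocompact ℝ) (𝓝 0) := by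
  refine (tendsto_intervalIntegral_exp_mul_cocompact (fun u => f (u - c)) (c + a) (c + b)).congr
    fun w => ?_
  rw [← integral_comp_add_left]
  simp

lemma integral_exp_I_mul {z : ℂ} (hz : z ≠ 0) (p q : ℝ) :
    ∫ k in p..q, cexp (I * k * z) = (cexp (I * q * z) - cexp (I * p * z)) / (I * z) := by
  simpa only [mul_comm _ z, mul_left_comm _ z, mul_assoc] using
    integral_exp_mul_complex (a := p) (b := q) (mul_ne_zero I_ne_zero hz)

lemma intervalIntegral_intervalIntegral_swap_of_continuousOn {E : Type*} [NormedAddCommGroup E]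
    [NormedSpace ℝ E] {F : ℝ → ℝ → E} {a b c d : ℝ}
    (hF : ContinuousOn F.uncurry (uIcc a b ×ˢ uIcc c d)) :
    ∫ x in a..b, ∫ y in c..d, F x y = ∫ y in c..d, ∫ x in a..b, F x y :=
  MeasureTheory.intervalIntegral_intervalIntegral_swap <|
    (hF.integrableOn_compact (isCompact_uIcc.prod isCompact_uIcc)).mono_set
      (prod_mono uIoc_subset_uIcc uIoc_subset_uIcc)

lemma intervalIntegral_intervalIntegral_exp_mul_add {g : ℝ → ℂ} {a b c : ℝ}
    (hg : ContinuousOn g (uIcc a b)) (hc : ∀ s ∈ uIcc a b, c + s ≠ 0) (p q : ℝ) :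
    ∫ k in p..q, ∫ s in a..b, cexp (I * k * (c + s)) * g s =
      (∫ s in a..b, cexp (I * q * (c + s)) * (g s / (I * (c + s)))) -
        ∫ s in a..b, cexp (I * p * (c + s)) * (g s / (I * (c + s))) := by
  have hcont : ∀ w : ℝ, ContinuousOn (fun s : ℝ => cexp (I * w * (c + s)) * (g s / (I * (c + s))))
      (uIcc a b) := fun w =>
    (Continuous.continuousOn (by fun_prop)).mul <| hg.div (Continuous.continuousOn (by fun_prop))
      fun s hs => mul_ne_zero I_ne_zero (by exact_mod_cast hc s hs)
  rw [intervalIntegral_intervalIntegral_swap_of_continuousOn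
      (F := fun k s : ℝ => cexp (I * k * (c + s)) * g s)
      ((Continuous.continuousOn (by fun_prop)).mul (hg.comp continuousOn_snd fun x hx => hx.2)),
    ← integral_sub (hcont q).intervalIntegrable (hcont p).intervalIntegrable]
  refine integral_congr fun s hs => ?_
  have hcs : (c : ℂ) + s ≠ 0 := by exact_mod_cast hc s hs
  simp only [integral_mul_const, integral_exp_I_mul hcs]
  ring

/-- Contour-deformation step of the unified transform method: if `c + t < 0` then the
improper iterated integral `lim_{C→∞} ∫_{-C}^{C} (∫_0^t e^{ik(c+s)} g(s) ds) dk` vanishes. -/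
theorem contour_integral_vanishes
    (t : ℝ) (ht : 0 < t) (g : ℝ → ℂ) (hg : ContDiffOn ℝ 1 g (Set.Icc 0 t))
    (c : ℝ) (hc : c + t < 0) :
    Tendsto (fun C : ℝ => ∫ k in (-C)..C, ∫ s in (0:ℝ)..t,
        Complex.exp (Complex.I * k * (c + s)) * g s) atTop (nhds 0) := by
  rw [← uIcc_of_le ht.le] at hg
  have hcs : ∀ s ∈ uIcc 0 t, c + s ≠ 0 := fun s hs => by
    rw [uIcc_of_le ht.le] at hs
    exact (show c + s < 0 by linarith [hs.2]).ne
  have hF := tendsto_intervalIntegral_exp_mul_add_cocompact (fun s => g s / (I * (c + s))) 0 t c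
  rw [cocompact_eq_atBot_atTop, tendsto_sup] at hF
  simp_rw [intervalIntegral_intervalIntegral_exp_mul_add hg.continuousOn hcs]
  simpa using hF.2.sub (hF.1.comp tendsto_neg_atTop_atBot)
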